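/- Let g : ℝ → ℝ be strictly convex and differentiable. Consider minimizing ∑_{j=1}^J g(w_j) subject to w_j ≥ 0 for all j, affine constraints of the form ∑_{j∈G_k} w_j a_k + terms depending only on the group index k, where G₁,…,G_K partitions [J]. Then at any minimizer, w_i = w_j whenever i and j belong to the same group. Specifically: if w is a minimizer of ∑_j g(w_j) subject to w ≥ 0 and Λ' Z' w = b and 1'w = 1 where Z is the membership matrix, then for i,j in the same group, w_i = w_j. -/

import Mathlib

/-!
If two weights `w i ≠ w j` of the same group differ, replacing both by their mean keeps every
constraint (each one weighs `i` and `j` alike) while strict convexity of `g` strictly lowers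
`g (w i) + g (w j)`, contradicting minimality.
-/

open Matrix

section PairAverage

variable {ι : Type*} [DecidableEq ι]

noncomputable def pairAverage (w : ι → ℝ) (i j : ι) : ι → ℝ :=
  fun t => if t = i ∨ t = j then (w i + w j) / 2 else w t

lemma pairAverage_self (w : ι → ℝ) (i : ι) : pairAverage w i i = w := by
  funext t
  by_cases h : t = i <;> simp [pairAverage, h]

lemma pairAverage_nonneg {w : ι → ℝ} (hw : ∀ t, 0 ≤ w t) (i j : ι) (t : ι) :
    0 ≤ pairAverage w i j t := by
  unfold pairAverage
  split_ifs
  · linarith [hw i, hw j]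
  · exact hw t

variable [Fintype ι]

lemma sum_pairAverage_sub (f : ι → ℝ → ℝ) (w : ι → ℝ) {i j : ι} (hij : i ≠ j) :
    ∑ t, f t (pairAverage w i j t) - ∑ t, f t (w t) =
      (f i ((w i + w j) / 2) - f i (w i)) + (f j ((w i + w j) / 2) - f j (w j)) := by
  rw [← Finset.sum_sub_distrib, Fintype.sum_eq_add i j hij]
  · simp [pairAverage]
  · rintro t ⟨hti, htj⟩
    simp [pairAverage, hti, htj]

lemma dotProduct_pairAverage {c : ι → ℝ} {i j : ι} (hc : c i = c j) (w : ι → ℝ) :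
    c ⬝ᵥ pairAverage w i j = c ⬝ᵥ w := by
  rcases eq_or_ne i j with rfl | hij
  · rw [pairAverage_self]
  · have h := sum_pairAverage_sub (fun t x => c t * x) w hij
    simp only [dotProduct] at h ⊢
    rw [hc] at h
    linarith

lemma mulVec_pairAverage {κ : Type*} {M : Matrix κ ι ℝ} {i j : ι}
    (hM : ∀ k, M k i = M k j) (w : ι → ℝ) : M *ᵥ pairAverage w i j = M *ᵥ w :=
  funext fun k => dotProduct_pairAverage (hM k) w

lemma sum_pairAverage (w : ι → ℝ) (i j : ι) : ∑ t, pairAverage w i j t = ∑ t, w t := by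
  simpa only [one_dotProduct] using dotProduct_pairAverage (c := 1) (i := i) (j := j) rfl w

lemma sum_comp_pairAverage_lt {g : ℝ → ℝ} {s : Set ℝ} (hg : StrictConvexOn ℝ s g)
    {w : ι → ℝ} {i j : ι} (hi : w i ∈ s) (hj : w j ∈ s) (hne : w i ≠ w j) :
    ∑ t, g (pairAverage w i j t) < ∑ t, g (w t) := by
  have hij : i ≠ j := fun h => hne (congrArg w h)
  have hmid : g ((w i + w j) / 2) < (g (w i) + g (w j)) / 2 := by
    have h := hg.2 hi hj hne (by norm_num : (0 : ℝ) < 1 / 2)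
      (by norm_num : (0 : ℝ) < 1 / 2) (by norm_num)
    rw [smul_eq_mul, smul_eq_mul, smul_eq_mul, smul_eq_mul,
      show (1 / 2 : ℝ) * w i + 1 / 2 * w j = (w i + w j) / 2 by ring] at h
    linarith
  linarith [sum_pairAverage_sub (fun _ => g) w hij]

end PairAverage

theorem minimizer_within_group_equal_general (J K r : ℕ) (G : Fin J → Fin K)
    (Z : Matrix (Fin J) (Fin K) ℝ)
    (hZ : ∀ j k, Z j k = if G j = k then 1 else 0)
    (Λ : Matrix (Fin K) (Fin r) ℝ) (b : Fin r → ℝ)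
    (g : ℝ → ℝ) (hg : StrictConvexOn ℝ Set.univ g)
    (w : Fin J → ℝ)
    (hfeas : (∀ j, 0 ≤ w j) ∧ Λᵀ.mulVec (Zᵀ.mulVec w) = b ∧ ∑ j, w j = 1)
    (hmin : ∀ v : Fin J → ℝ,
      ((∀ j, 0 ≤ v j) ∧ Λᵀ.mulVec (Zᵀ.mulVec v) = b ∧ ∑ j, v j = 1) →
      ∑ j, g (w j) ≤ ∑ j, g (v j)) :
    ∀ i j, G i = G j → w i = w j := by
  intro i j hG
  by_contra hne
  obtain ⟨hw_nonneg, hw_balance, hw_sum⟩ := hfeas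
  have hZ_cols : ∀ k, Zᵀ k i = Zᵀ k j := fun k => by simp only [transpose_apply, hZ, hG]
  have hv_feas : (∀ t, 0 ≤ pairAverage w i j t) ∧
      Λᵀ *ᵥ (Zᵀ *ᵥ pairAverage w i j) = b ∧ ∑ t, pairAverage w i j t = 1 :=
    ⟨pairAverage_nonneg hw_nonneg i j, by rw [mulVec_pairAverage hZ_cols, hw_balance],
      by rw [sum_pairAverage, hw_sum]⟩
  exact (hmin _ hv_feas).not_gt (sum_comp_pairAverage_lt hg trivial trivial hne)

/-- For a strictly convex differentiable `g`, any minimizer of `∑_j g(w_j)` subject to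
`w ≥ 0`, the balancing constraints `Λᵀ Zᵀ w = b`, and `1ᵀw = 1` (where `Z` is the
membership matrix of a partition of `[J]`) has within-group equal weights. -/
theorem minimizer_within_group_equal (J K r : ℕ) (G : Fin J → Fin K)
    (hsurj : Function.Surjective G)
    (Z : Matrix (Fin J) (Fin K) ℝ)
    (hZ : ∀ j k, Z j k = if G j = k then 1 else 0)
    (Λ : Matrix (Fin K) (Fin r) ℝ) (b : Fin r → ℝ)
    (g g' : ℝ → ℝ) (hg : StrictConvexOn ℝ Set.univ g)
    (hdiff : ∀ x : ℝ, HasDerivAt g (g' x) x)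
    (w : Fin J → ℝ)
    (hfeas : (∀ j, 0 ≤ w j) ∧ Λᵀ.mulVec (Zᵀ.mulVec w) = b ∧ ∑ j, w j = 1)
    (hmin : ∀ v : Fin J → ℝ,
      ((∀ j, 0 ≤ v j) ∧ Λᵀ.mulVec (Zᵀ.mulVec v) = b ∧ ∑ j, v j = 1) →
      ∑ j, g (w j) ≤ ∑ j, g (v j)) :
    ∀ i j, G i = G j → w i = w j :=
  minimizer_within_group_equal_general J K r G Z hZ Λ b g hg w hfeas hmin
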